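/- arXiv:2202.10986 — 2 statements merged into one kernel-verified Lean document; each statement's English description precedes it below -/
import Mathlib

section
/- Fix default costs α, β ∈ [0,1], a financial network, and a strategy profile s of the edge-removal game without cash injections, with maximal clearing payments P of the corresponding modified network. Let s' be obtained from s by a single bank i additionally removing a (nonempty) set of its incoming edges, and let P' be the maximal clearing payments of the network modified according to s'. If a_i(P') ≥ a_i(P), then a_k(P') ≥ a_k(P) for every bank k, and consequently the systemic liquidity satisfies F(P') ≥ F(P). -/
open Finset

/-- `p` is a proportional clearing payment matrix for the network with external assets `e`,
liabilities `l` and default costs `α, β`. -/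
def IsClearing {ι : Type*} [Fintype ι] (α β : ℝ) (e : ι → ℝ) (l : ι → ι → ℝ)
    (p : ι → ι → ℝ) : Prop :=
  (∀ i j, 0 ≤ p i j) ∧ (∀ i j, p i j ≤ l i j) ∧
  (∀ i, (∑ j, l i j) ≤ e i + (∑ j, p j i) → ∀ j, p i j = l i j) ∧
  (∀ i, e i + (∑ j, p j i) < (∑ j, l i j) →
    ∀ j, p i j = (α * e i + β * (∑ k, p k i)) * l i j / (∑ k, l i k))

/-- `p` is the maximal clearing payment matrix. -/
def IsMaxClearing {ι : Type*} [Fintype ι] (α β : ℝ) (e : ι → ℝ) (l p : ι → ι → ℝ) : Prop :=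
  IsClearing α β e l p ∧ ∀ q, IsClearing α β e l q → ∀ i j, q i j ≤ p i j

/-- Systemic liquidity: the sum of all payments. -/
def liquidity {ι : Type*} [Fintype ι] (p : ι → ι → ℝ) : ℝ := ∑ i, ∑ j, p i j

/-- Total assets of bank `i` under payments `p`. -/
def assets {ι : Type*} [Fintype ι] (e : ι → ℝ) (p : ι → ι → ℝ) (i : ι) : ℝ :=
  e i + ∑ j, p j i

/-- The liabilities obtained from `l` when each bank `j` removes the incoming edges from
the banks in `s j`. -/
def removeEdges {ι : Type*} [DecidableEq ι] (l : ι → ι → ℝ) (s : ι → Finset ι) :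
    ι → ι → ℝ :=
  fun i j => if i ∈ s j then 0 else l i j

/-!
Let `l' ≤ l` be the liabilities after the removal. Splice the old payments that survive the
removal onto the new maximal ones: `q = (P ⊓ l') ⊔ P'`. Every bank other than `i` still receives
all its old payments under `q`, and `i` does by the hypothesis on its assets, so no bank has
fewer assets under `q` than under `P`; a bank in default under `q` then pays pro rata out of
larger recovered assets against smaller total liabilities. Hence `q` is a post-fixed point of
the clearing map of `l'`, so by Knaster–Tarski it lies below a clearing matrix and thus below
the maximal one `P'`. In particular every payment of `P` to a bank other than `i` is matched in
`P'`. Liquidity follows by summing assets: total assets are total external assets plus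
liquidity.
-/

section ClearingMap

variable {ι : Type*} [Fintype ι] {α β : ℝ} {e : ι → ℝ} {l p q r : ι → ι → ℝ}

noncomputable def clearingMap (α β : ℝ) (e : ι → ℝ) (l q : ι → ι → ℝ) : ι → ι → ℝ :=
  fun k j => if ∑ m, l k m ≤ assets e q k then l k j
    else (α * e k + β * ∑ m, q m k) * l k j / ∑ m, l k m

lemma clearingMap_of_solvent {k : ι} (h : ∑ m, l k m ≤ assets e q k) (j : ι) :
    clearingMap α β e l q k j = l k j :=
  if_pos h

lemma clearingMap_of_default {k : ι} (h : assets e q k < ∑ m, l k m) (j : ι) :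
    clearingMap α β e l q k j = (α * e k + β * ∑ m, q m k) * l k j / ∑ m, l k m :=
  if_neg h.not_ge

lemma clearingMap_nonneg (hα : 0 ≤ α) (hβ : 0 ≤ β) (he : 0 ≤ e) (hl : 0 ≤ l) (hq : 0 ≤ q) :
    0 ≤ clearingMap α β e l q := by
  intro k j
  unfold clearingMap
  split_ifs
  · exact hl k j
  · have hrec : 0 ≤ α * e k + β * ∑ m, q m k :=
      add_nonneg (mul_nonneg hα (he k)) (mul_nonneg hβ (sum_nonneg fun m _ => hq m k))
    exact div_nonneg (mul_nonneg hrec (hl k j)) (sum_nonneg fun m _ => hl k m)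

lemma clearingMap_le (hα : α ≤ 1) (hβ : β ≤ 1) (he : 0 ≤ e) (hl : 0 ≤ l) (hq : 0 ≤ q) :
    clearingMap α β e l q ≤ l := by
  intro k j
  by_cases hk : ∑ m, l k m ≤ assets e q k
  · exact (clearingMap_of_solvent hk j).le
  · rw [not_le] at hk
    have hin : 0 ≤ ∑ m, q m k := sum_nonneg fun m _ => hq m k
    have hL : 0 < ∑ m, l k m := (add_nonneg (he k) hin).trans_lt hk
    have hrec : α * e k + β * ∑ m, q m k ≤ ∑ m, l k m := by
      have := mul_le_of_le_one_left (he k) hα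
      have := mul_le_of_le_one_left hin hβ
      unfold assets at hk
      linarith
    rw [clearingMap_of_default hk, div_le_iff₀ hL, mul_comm (l k j)]
    exact mul_le_mul_of_nonneg_right hrec (hl k j)

lemma clearingMap_mono (hα₁ : α ≤ 1) (hβ₀ : 0 ≤ β) (hβ₁ : β ≤ 1) (he : 0 ≤ e) (hl : 0 ≤ l)
    (hq : 0 ≤ q) (hqr : q ≤ r) : clearingMap α β e l q ≤ clearingMap α β e l r := by
  intro k j
  have hin : ∑ m, q m k ≤ ∑ m, r m k := sum_le_sum fun m _ => hqr m k
  by_cases hr : ∑ m, l k m ≤ assets e r k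
  · rw [clearingMap_of_solvent hr]
    exact clearingMap_le hα₁ hβ₁ he hl hq k j
  · rw [not_le] at hr
    have hq' : assets e q k < ∑ m, l k m := (add_le_add_right hin _).trans_lt hr
    have hL : 0 < ∑ m, l k m := (add_nonneg (he k) (sum_nonneg fun m _ => hq m k)).trans_lt hq'
    rw [clearingMap_of_default hq', clearingMap_of_default hr]
    gcongr
    exact hl k j

lemma IsClearing.clearingMap_eq (hp : IsClearing α β e l p) : clearingMap α β e l p = p := by
  ext k j
  by_cases hk : ∑ m, l k m ≤ assets e p k
  · rw [clearingMap_of_solvent hk, hp.2.2.1 k hk j]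
  · rw [not_le] at hk
    rw [clearingMap_of_default hk, hp.2.2.2 k hk j]

lemma isClearing_of_clearingMap_eq (hp₀ : 0 ≤ p) (hpl : p ≤ l)
    (hfix : clearingMap α β e l p = p) : IsClearing α β e l p := by
  have hfix' k j : p k j = clearingMap α β e l p k j := (congrFun (congrFun hfix k) j).symm
  exact ⟨hp₀, hpl, fun k hk j => (hfix' k j).trans (clearingMap_of_solvent hk j),
    fun k hk j => (hfix' k j).trans (clearingMap_of_default hk j)⟩

lemma exists_isClearing_ge (hα₀ : 0 ≤ α) (hα₁ : α ≤ 1) (hβ₀ : 0 ≤ β) (hβ₁ : β ≤ 1)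
    (he : 0 ≤ e) (hl : 0 ≤ l) (hq₀ : 0 ≤ q) (hql : q ≤ l) (hpost : q ≤ clearingMap α β e l q) :
    ∃ p, IsClearing α β e l p ∧ q ≤ p := by
  have : Fact (0 ≤ l) := ⟨hl⟩
  let Φ : Set.Icc 0 l →o Set.Icc 0 l :=
    { toFun := fun p => ⟨clearingMap α β e l p, clearingMap_nonneg hα₀ hβ₀ he hl p.2.1,
        clearingMap_le hα₁ hβ₁ he hl p.2.1⟩
      monotone' := fun p r hpr => clearingMap_mono hα₁ hβ₀ hβ₁ he hl p.2.1 hpr }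
  exact ⟨Φ.gfp,
    isClearing_of_clearingMap_eq Φ.gfp.2.1 Φ.gfp.2.2 (congrArg Subtype.val Φ.map_gfp),
    Φ.le_gfp (a := ⟨q, hq₀, hql⟩) hpost⟩

lemma IsMaxClearing.le_of_le_clearingMap (hp : IsMaxClearing α β e l p) (hα₀ : 0 ≤ α)
    (hα₁ : α ≤ 1) (hβ₀ : 0 ≤ β) (hβ₁ : β ≤ 1) (he : 0 ≤ e) (hl : 0 ≤ l) (hq₀ : 0 ≤ q)
    (hql : q ≤ l) (hpost : q ≤ clearingMap α β e l q) : q ≤ p := by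
  obtain ⟨r, hr, hqr⟩ := exists_isClearing_ge hα₀ hα₁ hβ₀ hβ₁ he hl hq₀ hql hpost
  exact hqr.trans (hp.2 r hr)

end ClearingMap

section EdgeRemoval

variable {ι : Type*} {l l' : ι → ι → ℝ}

def IsEdgeRemoval (l' l : ι → ι → ℝ) : Prop :=
  ∀ k j, l' k j = l k j ∨ l' k j = 0

lemma IsEdgeRemoval.le (h : IsEdgeRemoval l' l) (hl : 0 ≤ l) : l' ≤ l := fun k j =>
  (h k j).elim le_of_eq fun h0 => h0 ▸ hl k j

lemma IsEdgeRemoval.nonneg (h : IsEdgeRemoval l' l) (hl : 0 ≤ l) : 0 ≤ l' := fun k j =>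
  (h k j).elim (fun h1 => h1 ▸ hl k j) ge_of_eq

variable [Fintype ι] {α β : ℝ} {e : ι → ℝ} {p p' q : ι → ι → ℝ}

lemma IsClearing.inf_le_clearingMap (hp : IsClearing α β e l p) (hα : 0 ≤ α) (hβ : 0 ≤ β)
    (he : 0 ≤ e) (hl : 0 ≤ l) (hl' : IsEdgeRemoval l' l) (hq : 0 ≤ q)
    (hassets : ∀ k, assets e p k ≤ assets e q k) : p ⊓ l' ≤ clearingMap α β e l' q := by
  intro k j
  by_cases hsolv : ∑ m, l' k m ≤ assets e q k
  · rw [clearingMap_of_solvent hsolv]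
    exact inf_le_right
  rw [not_le] at hsolv
  rcases hl' k j with hkj | hkj
  · have hL : ∑ m, l' k m ≤ ∑ m, l k m := sum_le_sum fun m _ => hl'.le hl k m
    have hdefault : assets e p k < ∑ m, l k m := ((hassets k).trans_lt hsolv).trans_le hL
    have hL'pos : 0 < ∑ m, l' k m :=
      (add_nonneg (he k) (sum_nonneg fun m _ => hq m k)).trans_lt hsolv
    have hin : ∑ m, p m k ≤ ∑ m, q m k := by
      simpa only [assets, add_le_add_iff_left] using hassets k
    calc (p ⊓ l') k j ≤ p k j := inf_le_left
      _ = (α * e k + β * ∑ m, p m k) * l k j / ∑ m, l k m := hp.2.2.2 k hdefault j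
      _ ≤ (α * e k + β * ∑ m, q m k) * l' k j / ∑ m, l' k m := by
        have hrec : 0 ≤ α * e k + β * ∑ m, q m k :=
          add_nonneg (mul_nonneg hα (he k)) (mul_nonneg hβ (sum_nonneg fun m _ => hq m k))
        rw [hkj]
        refine div_le_div₀ (mul_nonneg hrec (hl k j)) ?_ hL'pos hL
        gcongr
        exact hl k j
      _ = clearingMap α β e l' q k j := (clearingMap_of_default hsolv j).symm
  · calc (p ⊓ l') k j ≤ l' k j := inf_le_right
      _ = 0 := hkj
      _ ≤ clearingMap α β e l' q k j := clearingMap_nonneg hα hβ he (hl'.nonneg hl) hq k j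

lemma IsMaxClearing.inf_le (hp' : IsMaxClearing α β e l' p') (hp : IsClearing α β e l p)
    (hα₀ : 0 ≤ α) (hα₁ : α ≤ 1) (hβ₀ : 0 ≤ β) (hβ₁ : β ≤ 1) (he : 0 ≤ e) (hl : 0 ≤ l)
    (hl' : IsEdgeRemoval l' l)
    (hcol : ∀ k, (∀ m, l' m k = l m k) ∨ assets e p k ≤ assets e p' k) : p ⊓ l' ≤ p' := by
  set q := p ⊓ l' ⊔ p'
  have hq₀ : 0 ≤ q := le_sup_of_le_right hp'.1.1
  have hql : q ≤ l' := sup_le inf_le_right hp'.1.2.1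
  have hassets k : assets e p k ≤ assets e q k := by
    rcases hcol k with hk | hk
    · unfold assets
      gcongr with m
      exact le_sup_of_le_left (le_inf le_rfl ((hp.2.1 m k).trans_eq (hk m).symm))
    · refine hk.trans ?_
      unfold assets
      gcongr with m
      exact le_sup_right
  have hpost : q ≤ clearingMap α β e l' q := by
    refine sup_le (hp.inf_le_clearingMap hα₀ hβ₀ he hl hl' hq₀ hassets) ?_
    calc p' = clearingMap α β e l' p' := hp'.1.clearingMap_eq.symm
      _ ≤ clearingMap α β e l' q :=
        clearingMap_mono hα₁ hβ₀ hβ₁ he (hl'.nonneg hl) hp'.1.1 le_sup_right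
  exact le_sup_left.trans
    (hp'.le_of_le_clearingMap hα₀ hα₁ hβ₀ hβ₁ he (hl'.nonneg hl) hq₀ hql hpost)

theorem assets_le_of_isEdgeRemoval (hp : IsClearing α β e l p) (hp' : IsMaxClearing α β e l' p')
    (hα₀ : 0 ≤ α) (hα₁ : α ≤ 1) (hβ₀ : 0 ≤ β) (hβ₁ : β ≤ 1) (he : 0 ≤ e) (hl : 0 ≤ l)
    (hl' : IsEdgeRemoval l' l)
    (hcol : ∀ k, (∀ m, l' m k = l m k) ∨ assets e p k ≤ assets e p' k) (k : ι) :
    assets e p k ≤ assets e p' k := by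
  refine (hcol k).elim (fun hk => ?_) id
  have hinf := hp'.inf_le hp hα₀ hα₁ hβ₀ hβ₁ he hl hl' hcol
  unfold assets
  gcongr with m
  calc p m k = (p ⊓ l') m k := (inf_eq_left.2 ((hp.2.1 m k).trans_eq (hk m).symm)).symm
    _ ≤ p' m k := hinf m k

end EdgeRemoval

section RemoveEdges

variable {ι : Type*} [DecidableEq ι] {l : ι → ι → ℝ} {s t : ι → Finset ι}

lemma removeEdges_nonneg (hl : 0 ≤ l) : 0 ≤ removeEdges l s := fun k j => by
  unfold removeEdges
  split_ifs
  exacts [le_rfl, hl k j]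

lemma isEdgeRemoval_removeEdges (hst : ∀ j, s j ⊆ t j) :
    IsEdgeRemoval (removeEdges l t) (removeEdges l s) := fun k j => by
  unfold removeEdges
  by_cases hk : k ∈ s j
  · simp [hk, hst j hk]
  · by_cases hk' : k ∈ t j <;> simp [hk, hk']

lemma removeEdges_update_of_ne {i j : ι} (hj : j ≠ i) (x : Finset ι) (k : ι) :
    removeEdges l (Function.update s i x) k j = removeEdges l s k j := by
  simp only [removeEdges, Function.update_of_ne hj]

end RemoveEdges

lemma sum_assets {ι : Type*} [Fintype ι] (e : ι → ℝ) (p : ι → ι → ℝ) :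
    ∑ k, assets e p k = ∑ k, e k + liquidity p := by
  rw [liquidity, sum_comm, ← sum_add_distrib]
  rfl

lemma liquidity_le_of_assets_le {ι : Type*} [Fintype ι] {e : ι → ℝ} {p p' : ι → ι → ℝ}
    (h : ∀ k, assets e p k ≤ assets e p' k) : liquidity p ≤ liquidity p' := by
  have := sum_le_sum fun k (_ : k ∈ univ) => h k
  rw [sum_assets, sum_assets] at this
  linarith

theorem beneficial_removal_helps_everyone_general
    (ι : Type*) [Fintype ι] [DecidableEq ι]
    (α β : ℝ) (hα₀ : 0 ≤ α) (hα₁ : α ≤ 1) (hβ₀ : 0 ≤ β) (hβ₁ : β ≤ 1)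
    (e : ι → ℝ) (he : ∀ i, 0 ≤ e i)
    (l : ι → ι → ℝ) (hl : ∀ i j, 0 ≤ l i j)
    (s : ι → Finset ι) (i : ι) (R : Finset ι)
    (P P' : ι → ι → ℝ)
    (hP : IsMaxClearing α β e (removeEdges l s) P)
    (hP' : IsMaxClearing α β e (removeEdges l (Function.update s i (s i ∪ R))) P')
    (hi : assets e P i ≤ assets e P' i) :
    (∀ k, assets e P k ≤ assets e P' k) ∧ liquidity P ≤ liquidity P' := by
  set s' := Function.update s i (s i ∪ R)
  have hremoval : IsEdgeRemoval (removeEdges l s') (removeEdges l s) :=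
    isEdgeRemoval_removeEdges fun j => by
      rcases eq_or_ne j i with rfl | hj
      · simpa only [s', Function.update_self] using subset_union_left
      · simp only [s', Function.update_of_ne hj, subset_refl]
  have hcol k : (∀ m, removeEdges l s' m k = removeEdges l s m k) ∨
      assets e P k ≤ assets e P' k := by
    rcases eq_or_ne k i with rfl | hk
    exacts [Or.inr hi, Or.inl (removeEdges_update_of_ne hk _)]
  have hassets := assets_le_of_isEdgeRemoval hP.1 hP' hα₀ hα₁ hβ₀ hβ₁ he
    (removeEdges_nonneg hl) hremoval hcol
  exact ⟨hassets, liquidity_le_of_assets_le hassets⟩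

/-- In edge-removal games with default costs and no cash injections, if a single bank `i`
additionally removes a nonempty set `R` of its incoming edges and its total assets do not
decrease, then the total assets of every bank do not decrease; consequently the systemic
liquidity does not decrease. -/
theorem beneficial_removal_helps_everyone
    (ι : Type*) [Fintype ι] [DecidableEq ι]
    (α β : ℝ) (hα₀ : 0 ≤ α) (hα₁ : α ≤ 1) (hβ₀ : 0 ≤ β) (hβ₁ : β ≤ 1)
    (e : ι → ℝ) (he : ∀ i, 0 ≤ e i)
    (l : ι → ι → ℝ) (hl : ∀ i j, 0 ≤ l i j) (hdiag : ∀ i, l i i = 0)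
    (s : ι → Finset ι) (i : ι) (R : Finset ι) (hR : R.Nonempty)
    (P P' : ι → ι → ℝ)
    (hP : IsMaxClearing α β e (removeEdges l s) P)
    (hP' : IsMaxClearing α β e (removeEdges l (Function.update s i (s i ∪ R))) P')
    (hi : assets e P i ≤ assets e P' i) :
    (∀ k, assets e P k ≤ assets e P' k) ∧ liquidity P ≤ liquidity P' :=
  beneficial_removal_helps_everyone_general ι α β hα₀ hα₁ hβ₀ hβ₁ e he l hl s i R P P' hP hP' hi
end

section
/- Let n ≥ 3 and ε ∈ (0,1), and consider the financial network with banks v_1,…,v_n, external assets e_{v_1} = 1 and all others 0, liabilities l_{v_i, v_{i+1}} = 1 for i = 1,…,n−1 and l_{v_1, v_n} = 1 (all others 0), default costs α = β = ε, and no cash injections. Then: (i) the maximal clearing payments of the full network are p_{v_1,v_2} = p_{v_1,v_n} = ε/2 and p_{v_i, v_{i+1}} = ε^i/2 for i = 2,…,n−1, so the systemic liquidity of the full network equals ε/2 + Σ_{i=1}^{n−1} ε^i/2, which is strictly less than ε/(1−ε); (ii) the strategy profile in which v_n removes the edge (v_1, v_n) and all other edges are kept is the unique pure Nash equilibrium of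 the edge-removal game, and its systemic liquidity is n−1. Consequently, the Effect of Stability of edge-removal games with default costs is less than ε/((1−ε)(n−1)), and hence can be made arbitrarily close to 0. -/
open Finset

/-- `s` is a pure Nash equilibrium of the edge-removal game with payment rule `Pay`. -/
def NashEq {ι : Type*} [Fintype ι] [DecidableEq ι] (e : ι → ℝ)
    (Pay : (ι → Finset ι) → ι → ι → ℝ) (s : ι → Finset ι) : Prop :=
  ∀ (j : ι) (R : Finset ι),
    assets e (Pay (Function.update s j R)) j ≤ assets e (Pay s) j

/-!
Bank `i : Fin n` is the paper's `v_{i+1}`.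

In the full network bank `0` owes two units but holds one, so it defaults and pays `ε / 2` on
each edge; every later bank on the path holds less than the unit it owes, defaults and passes on
the fraction `ε` of what it receives. This bounds every clearing matrix by the payments
`ε ^ i / 2`, which are themselves clearing. Once the last bank drops the chord, bank `0` is
solvent, the whole path pays in full and every bank ends with assets `1`, more than any bank can
ever get, so this is an equilibrium. Conversely, a bank on the path that removes its incoming
edge ends with nothing although keeping it brings a positive payment, and the last bank gets `1`
by dropping exactly the chord but less otherwise: `ε / 2 + ε ^ (n - 1) / 2` or `0`.
-/

section Clearing

variable {ι : Type*} [Fintype ι] {α β : ℝ} {e : ι → ℝ} {l p : ι → ι → ℝ}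

namespace IsClearing

theorem eq_zero_of_liability_eq_zero (hp : IsClearing α β e l p) {i j : ι} (h : l i j = 0) :
    p i j = 0 :=
  le_antisymm (h ▸ hp.2.1 i j) (hp.1 i j)

theorem le_assets (hp : IsClearing α β e l p) {j : ι} (he : 0 ≤ e j) (i : ι) :
    p i j ≤ assets e p j :=
  (single_le_sum (fun k _ => hp.1 k j) (mem_univ i)).trans (le_add_of_nonneg_left he)

theorem le_of_assets_lt (hp : IsClearing α β e l p) (hα : 0 ≤ α) (hβ : 0 ≤ β) {i j : ι}
    (he : 0 ≤ e i) (hl : ∀ k, 0 ≤ l i k) (h : assets e p i < l i j) :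
    p i j ≤ α * e i + β * ∑ k, p k i := by
  have hL : l i j ≤ ∑ k, l i k := single_le_sum (fun k _ => hl k) (mem_univ j)
  have hin : 0 ≤ ∑ k, p k i := sum_nonneg fun k _ => hp.1 k i
  rw [hp.2.2.2 i (h.trans_le hL) j, mul_div_assoc]
  exact mul_le_of_le_one_right (by positivity) (div_le_one_of_le₀ hL ((hl j).trans hL))

theorem pos_of_assets_pos (hp : IsClearing α β e l p) (hα : 0 < α) (hβ : 0 < β) {i j : ι}
    (he : 0 ≤ e i) (hl : ∀ k, 0 ≤ l i k) (hij : 0 < l i j) (h : 0 < assets e p i) :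
    0 < p i j := by
  by_cases hsolv : ∑ k, l i k ≤ assets e p i
  · rw [hp.2.2.1 i hsolv j]
    exact hij
  · have hL : 0 < ∑ k, l i k := hij.trans_le (single_le_sum (fun k _ => hl k) (mem_univ j))
    have hin : 0 ≤ ∑ k, p k i := sum_nonneg fun k _ => hp.1 k i
    have hnum : 0 < α * e i + β * ∑ k, p k i := by
      rcases he.lt_or_eq with he | he
      · exact add_pos_of_pos_of_nonneg (mul_pos hα he) (by positivity)
      · rw [← he, mul_zero, zero_add]
        exact mul_pos hβ (by simpa [assets, ← he] using h)
    rw [hp.2.2.2 i (not_le.mp hsolv) j]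
    exact div_pos (mul_pos hnum hij) hL

end IsClearing

theorem isClearing_self (hl : ∀ i j, 0 ≤ l i j) (h : ∀ i, ∑ j, l i j ≤ assets e l i) :
    IsClearing α β e l l :=
  ⟨hl, fun _ _ => le_rfl, fun _ _ _ => rfl, fun i hi => absurd (h i) (not_le.mpr hi)⟩

theorem IsMaxClearing.eq_of_isClearing_self (hp : IsMaxClearing α β e l p)
    (hl : IsClearing α β e l l) : p = l :=
  funext fun i => funext fun j => le_antisymm (hp.1.2.1 i j) (hp.2 l hl i j)

theorem liquidity_eq_sum_assets_sub_sum (e : ι → ℝ) (p : ι → ι → ℝ) :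
    liquidity p = ∑ j, assets e p j - ∑ j, e j := by
  simp only [liquidity, assets, sum_add_distrib, add_sub_cancel_left]
  exact sum_comm

end Clearing

theorem removeEdges_empty {ι : Type*} [DecidableEq ι] (l : ι → ι → ℝ) :
    removeEdges l (fun _ => ∅) = l := by
  funext i j
  simp [removeEdges]

theorem sum_range_ite_one_le (f : ℕ → ℝ) (n : ℕ) :
    ∑ j ∈ range n, (if 1 ≤ j then f j else 0) = ∑ j ∈ Icc 1 (n - 1), f j := by
  rw [← sum_filter]
  congr 1
  ext j
  simp only [mem_filter, mem_range, mem_Icc]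
  lia

namespace PathChord

noncomputable section

def liab (n : ℕ) : Fin n → Fin n → ℝ := fun a b =>
  if ((b : ℕ) = (a : ℕ) + 1) ∨ ((a : ℕ) = 0 ∧ (b : ℕ) = n - 1) then 1 else 0

def extAssets (n : ℕ) : Fin n → ℝ := fun i => if (i : ℕ) = 0 then 1 else 0

def pathLiab (n : ℕ) : Fin n → Fin n → ℝ := fun a b => if (b : ℕ) = (a : ℕ) + 1 then 1 else 0

def fullPayments (n : ℕ) (ε : ℝ) : Fin n → Fin n → ℝ := fun a b =>
  if (a : ℕ) = 0 ∧ ((b : ℕ) = 1 ∨ (b : ℕ) = n - 1) then ε / 2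
  else if (b : ℕ) = (a : ℕ) + 1 ∧ 1 ≤ (a : ℕ) then ε ^ ((a : ℕ) + 1) / 2 else 0

def stableProfile (n : ℕ) (h : 0 < n) : Fin n → Finset (Fin n) := fun j =>
  if (j : ℕ) = n - 1 then {⟨0, h⟩} else ∅

end

variable {n : ℕ}

theorem liab_nonneg (i j : Fin n) : 0 ≤ liab n i j := by
  unfold liab; split <;> norm_num

theorem liab_le_one (i j : Fin n) : liab n i j ≤ 1 := by
  unfold liab; split <;> norm_num

theorem liab_eq_one {i j : Fin n} (h : (j : ℕ) = i + 1 ∨ ((i : ℕ) = 0 ∧ (j : ℕ) = n - 1)) :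
    liab n i j = 1 :=
  if_pos h

theorem liab_eq_zero {i j : Fin n} (h : ¬((j : ℕ) = i + 1 ∨ ((i : ℕ) = 0 ∧ (j : ℕ) = n - 1))) :
    liab n i j = 0 :=
  if_neg h

theorem isEdge_of_liab_pos {i j : Fin n} (h : 0 < liab n i j) :
    (j : ℕ) = i + 1 ∨ ((i : ℕ) = 0 ∧ (j : ℕ) = n - 1) :=
  of_not_not fun hne => h.ne' (liab_eq_zero hne)

theorem extAssets_nonneg (i : Fin n) : 0 ≤ extAssets n i := by
  unfold extAssets; split <;> norm_num

theorem extAssets_eq_zero {i : Fin n} (h : (i : ℕ) ≠ 0) : extAssets n i = 0 :=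
  if_neg h

theorem sum_extAssets (hn : 0 < n) : ∑ i, extAssets n i = 1 := by
  simp only [extAssets]
  rw [Fin.sum_univ_eq_sum_range (fun i => if i = 0 then (1 : ℝ) else 0) n, sum_ite_eq',
    if_pos (mem_range.mpr hn)]

def Supported (m : Fin n → Fin n → ℝ) : Prop :=
  ∀ i j, liab n i j = 0 → m i j = 0

namespace Supported

variable {m : Fin n → Fin n → ℝ}

theorem sum_row_zero (hm : Supported m) (hn : 3 ≤ n) :
    ∑ j, m ⟨0, by lia⟩ j = m ⟨0, by lia⟩ ⟨1, by lia⟩ + m ⟨0, by lia⟩ ⟨n - 1, by lia⟩ :=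
  Fintype.sum_eq_add _ _ (by simp [Fin.ext_iff]; lia) fun j hj =>
    hm _ _ (liab_eq_zero (by simp only [ne_eq, Fin.ext_iff] at hj; lia))

theorem sum_row_of_succ (hm : Supported m) {i j : Fin n} (hij : (j : ℕ) = i + 1)
    (hi : (i : ℕ) ≠ 0) : ∑ k, m i k = m i j :=
  Fintype.sum_eq_single _ fun k hk =>
    hm _ _ (liab_eq_zero (by simp only [ne_eq, Fin.ext_iff] at hk; lia))

theorem sum_col_zero (hm : Supported m) (hn : 2 ≤ n) : ∑ i, m i ⟨0, by lia⟩ = 0 :=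
  sum_eq_zero fun i _ => hm _ _ (liab_eq_zero (by simp only; lia))

theorem sum_col_of_pred (hm : Supported m) {i j : Fin n} (hij : (j : ℕ) = i + 1)
    (hj : (j : ℕ) ≠ n - 1) : ∑ k, m k j = m i j :=
  Fintype.sum_eq_single _ fun k hk =>
    hm _ _ (liab_eq_zero (by simp only [ne_eq, Fin.ext_iff] at hk; lia))

theorem sum_col_last (hm : Supported m) (hn : 3 ≤ n) :
    ∑ i, m i ⟨n - 1, by lia⟩ =
      m ⟨0, by lia⟩ ⟨n - 1, by lia⟩ + m ⟨n - 2, by lia⟩ ⟨n - 1, by lia⟩ :=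
  Fintype.sum_eq_add _ _ (by simp [Fin.ext_iff]; lia) fun i hi =>
    hm _ _ (liab_eq_zero (by simp only [ne_eq, Fin.ext_iff] at hi; lia))

theorem assets_zero (hm : Supported m) (hn : 2 ≤ n) : assets (extAssets n) m ⟨0, by lia⟩ = 1 := by
  rw [assets, hm.sum_col_zero hn, extAssets, if_pos rfl, add_zero]

theorem assets_of_pred (hm : Supported m) {i j : Fin n} (hij : (j : ℕ) = i + 1)
    (hj : (j : ℕ) ≠ n - 1) : assets (extAssets n) m j = m i j := by
  rw [assets, hm.sum_col_of_pred hij hj, extAssets_eq_zero (by lia), zero_add]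

theorem assets_last (hm : Supported m) (hn : 3 ≤ n) :
    assets (extAssets n) m ⟨n - 1, by lia⟩ =
      m ⟨0, by lia⟩ ⟨n - 1, by lia⟩ + m ⟨n - 2, by lia⟩ ⟨n - 1, by lia⟩ := by
  rw [assets, hm.sum_col_last hn, extAssets_eq_zero (by simp only; lia), zero_add]

end Supported

theorem supported_liab : Supported (liab n) := fun _ _ h => h

theorem supported_removeEdges (s : Fin n → Finset (Fin n)) : Supported (removeEdges (liab n) s) :=
  fun i j h => by simp [removeEdges, h]

theorem supported_of_isClearing {ε : ℝ} {s : Fin n → Finset (Fin n)} {q : Fin n → Fin n → ℝ}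
    (hq : IsClearing ε ε (extAssets n) (removeEdges (liab n) s) q) : Supported q :=
  fun i j h => hq.eq_zero_of_liability_eq_zero (supported_removeEdges s i j h)

section Profile

variable {ε : ℝ} {s : Fin n → Finset (Fin n)} {q : Fin n → Fin n → ℝ}

theorem removeEdges_liab_nonneg (s : Fin n → Finset (Fin n)) (i j : Fin n) :
    0 ≤ removeEdges (liab n) s i j := by
  unfold removeEdges
  split
  exacts [le_rfl, liab_nonneg i j]

theorem removeEdges_liab_of_notMem {i j : Fin n} (h : i ∉ s j)
    (hij : (j : ℕ) = i + 1 ∨ ((i : ℕ) = 0 ∧ (j : ℕ) = n - 1)) :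
    removeEdges (liab n) s i j = 1 := by
  rw [removeEdges, if_neg h, liab_eq_one hij]

theorem payment_le_one (hq : IsClearing ε ε (extAssets n) (removeEdges (liab n) s) q)
    (i j : Fin n) : q i j ≤ 1 := by
  refine (hq.2.1 i j).trans ?_
  unfold removeEdges
  split
  exacts [zero_le_one, liab_le_one i j]

theorem payment_eq_zero_of_mem (hq : IsClearing ε ε (extAssets n) (removeEdges (liab n) s) q)
    {i j : Fin n} (h : i ∈ s j) : q i j = 0 :=
  hq.eq_zero_of_liability_eq_zero (if_pos h)

/-- Bank `0` holds one unit, receives nothing and owes two units, so it defaults. -/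
theorem payments_from_zero_eq (hn : 3 ≤ n) (hq : IsClearing ε ε (extAssets n) (removeEdges (liab n) s) q)
    (h1 : ⟨0, by lia⟩ ∉ s ⟨1, by lia⟩) (hc : ⟨0, by lia⟩ ∉ s ⟨n - 1, by lia⟩) :
    q ⟨0, by lia⟩ ⟨1, by lia⟩ = ε / 2 ∧ q ⟨0, by lia⟩ ⟨n - 1, by lia⟩ = ε / 2 := by
  have hm := supported_of_isClearing hq
  have hL : ∑ j, removeEdges (liab n) s ⟨0, by lia⟩ j = 2 := by
    rw [(supported_removeEdges s).sum_row_zero hn, removeEdges_liab_of_notMem h1 (by simp),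
      removeEdges_liab_of_notMem hc (by simp)]
    norm_num
  have hdefault := hq.2.2.2 ⟨0, by lia⟩
    (show assets _ q _ < _ by rw [hm.assets_zero (by lia), hL]; norm_num)
  rw [hdefault, hdefault, hm.sum_col_zero (by lia), hL, removeEdges_liab_of_notMem h1 (by simp),
    removeEdges_liab_of_notMem hc (by simp), extAssets, if_pos rfl]
  constructor <;> ring

/-- Each bank on the path owes one unit but holds less, so it defaults and passes on only the
fraction `ε` of what it receives. -/
theorem payment_le_of_succ (hn : 3 ≤ n) (hε₀ : 0 < ε) (hε₁ : ε < 1)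
    (hq : IsClearing ε ε (extAssets n) (removeEdges (liab n) s) q)
    (hc : ⟨0, by lia⟩ ∉ s ⟨n - 1, by lia⟩) {i j : Fin n} (hij : (j : ℕ) = i + 1) :
    q i j ≤ ε ^ (j : ℕ) / 2 := by
  obtain ⟨a, ha⟩ : ∃ a, (i : ℕ) = a := ⟨_, rfl⟩
  induction a generalizing i j with
  | zero =>
    obtain rfl : i = ⟨0, Nat.zero_lt_of_lt hn⟩ := Fin.ext ha
    obtain rfl : j = ⟨1, (by norm_num : 1 < 3).trans_le hn⟩ := Fin.ext (by simpa using hij)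
    by_cases h1 : (⟨0, by lia⟩ : Fin n) ∈ s ⟨1, by lia⟩
    · rw [payment_eq_zero_of_mem hq h1]
      positivity
    · simp [(payments_from_zero_eq hn hq h1 hc).1]
  | succ a ih =>
    by_cases hremoved : i ∈ s j
    · rw [payment_eq_zero_of_mem hq hremoved]
      positivity
    have hk : q ⟨a, by lia⟩ i ≤ ε ^ (i : ℕ) / 2 := ih (by simp only; lia) rfl
    have hin : ∑ k, q k i = q ⟨a, by lia⟩ i :=
      (supported_of_isClearing hq).sum_col_of_pred (by simp only; lia) (by lia)
    have hlt : ε ^ (i : ℕ) < 1 := pow_lt_one₀ hε₀.le hε₁ (by lia)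
    have hle := hq.le_of_assets_lt hε₀.le hε₀.le (extAssets_nonneg i)
      (removeEdges_liab_nonneg s i)
      (by rw [assets, hin, extAssets_eq_zero (by lia), removeEdges_liab_of_notMem hremoved
        (Or.inl hij)]; linarith)
    rw [extAssets_eq_zero (by lia), hin, mul_zero, zero_add] at hle
    calc q i j ≤ ε * (ε ^ (i : ℕ) / 2) := hle.trans (mul_le_mul_of_nonneg_left hk hε₀.le)
      _ = ε ^ (j : ℕ) / 2 := by rw [hij, pow_succ]; ring

theorem assets_last_lt_one (hn : 3 ≤ n) (hε₀ : 0 < ε) (hε₁ : ε < 1)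
    (hq : IsClearing ε ε (extAssets n) (removeEdges (liab n) s) q)
    (h1 : ⟨0, by lia⟩ ∉ s ⟨1, by lia⟩) (hc : ⟨0, by lia⟩ ∉ s ⟨n - 1, by lia⟩) :
    assets (extAssets n) q ⟨n - 1, by lia⟩ < 1 := by
  have hpath : q ⟨n - 2, by lia⟩ ⟨n - 1, by lia⟩ ≤ ε ^ (n - 1) / 2 :=
    payment_le_of_succ hn hε₀ hε₁ hq hc (by simp only; lia)
  have hpow : ε ^ (n - 1) < 1 := pow_lt_one₀ hε₀.le hε₁ (by lia)
  rw [(supported_of_isClearing hq).assets_last hn, (payments_from_zero_eq hn hq h1 hc).2]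
  linarith

theorem assets_last_le_one (hn : 3 ≤ n) (hε₀ : 0 < ε) (hε₁ : ε < 1)
    (hq : IsClearing ε ε (extAssets n) (removeEdges (liab n) s) q)
    (h1 : ⟨0, by lia⟩ ∉ s ⟨1, by lia⟩) : assets (extAssets n) q ⟨n - 1, by lia⟩ ≤ 1 := by
  by_cases hc : (⟨0, by lia⟩ : Fin n) ∈ s ⟨n - 1, by lia⟩
  · rw [(supported_of_isClearing hq).assets_last hn, payment_eq_zero_of_mem hq hc, zero_add]
    exact payment_le_one hq _ _
  · exact (assets_last_lt_one hn hε₀ hε₁ hq h1 hc).le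

theorem assets_le_one_of_ne_last (hn : 2 ≤ n)
    (hq : IsClearing ε ε (extAssets n) (removeEdges (liab n) s) q) {j : Fin n}
    (hj : (j : ℕ) ≠ n - 1) : assets (extAssets n) q j ≤ 1 := by
  by_cases h0 : (j : ℕ) = 0
  · obtain rfl : j = ⟨0, Nat.zero_lt_of_lt hn⟩ := Fin.ext h0
    rw [(supported_of_isClearing hq).assets_zero hn]
  · rw [(supported_of_isClearing hq).assets_of_pred (i := ⟨j - 1, by lia⟩) (by simp only; lia)
      hj]
    exact payment_le_one hq _ _

/-- With positive default costs, a bank with positive assets pays something on every edge it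
keeps, so the cash of bank `0` travels along the path. -/
theorem assets_pos_of_keeps (hε₀ : 0 < ε)
    (hq : IsClearing ε ε (extAssets n) (removeEdges (liab n) s) q) {m : ℕ}
    (hs : ∀ j : Fin n, (j : ℕ) ≤ m → s j = ∅) {j : Fin n} (hj : (j : ℕ) ≤ m) :
    0 < assets (extAssets n) q j := by
  obtain ⟨a, ha⟩ : ∃ a, (j : ℕ) = a := ⟨_, rfl⟩
  induction a generalizing j with
  | zero =>
    have hin : 0 ≤ ∑ k, q k j := sum_nonneg fun k _ => hq.1 k j
    rw [assets, extAssets, if_pos ha]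
    positivity
  | succ a ih =>
    set i : Fin n := ⟨a, by lia⟩
    have hl : removeEdges (liab n) s i j = 1 :=
      removeEdges_liab_of_notMem (by rw [hs j hj]; exact notMem_empty i) (Or.inl (by simp [i, ha]))
    have hpay := hq.pos_of_assets_pos hε₀ hε₀ (extAssets_nonneg i) (removeEdges_liab_nonneg s i)
      (hl ▸ one_pos) (ih (j := i) (by simp only [i]; lia) rfl)
    exact hpay.trans_le (hq.le_assets (extAssets_nonneg j) i)

end Profile

section Equilibrium

theorem removeEdges_stableProfile (hn : 3 ≤ n) :
    removeEdges (liab n) (stableProfile n (by lia)) = pathLiab n := by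
  funext i j
  simp only [removeEdges, stableProfile, liab, pathLiab]
  split_ifs <;> simp only [mem_singleton, notMem_empty, Fin.ext_iff] at * <;> lia

theorem supported_pathLiab (hn : 3 ≤ n) : Supported (pathLiab n) :=
  removeEdges_stableProfile hn ▸ supported_removeEdges _

theorem assets_pathLiab (hn : 3 ≤ n) (j : Fin n) : assets (extAssets n) (pathLiab n) j = 1 := by
  have hm := supported_pathLiab hn
  rcases (by lia : (j : ℕ) = 0 ∨ (j : ℕ) = n - 1 ∨ ((j : ℕ) ≠ 0 ∧ (j : ℕ) ≠ n - 1))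
    with h0 | hlast | ⟨h0, hlast⟩
  · obtain rfl : j = ⟨0, Nat.zero_lt_of_lt hn⟩ := Fin.ext h0
    exact hm.assets_zero (by lia)
  · obtain rfl : j = ⟨n - 1, Nat.sub_one_lt (Nat.ne_zero_of_lt hn)⟩ := Fin.ext hlast
    rw [hm.assets_last hn]
    simp only [pathLiab]
    rw [if_neg (by lia), if_pos (by lia)]
    norm_num
  · rw [hm.assets_of_pred (i := ⟨j - 1, by lia⟩) (by simp only; lia) hlast, pathLiab,
      if_pos (by simp only; lia)]

theorem isClearing_pathLiab (hn : 3 ≤ n) (ε : ℝ) :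
    IsClearing ε ε (extAssets n) (pathLiab n) (pathLiab n) := by
  refine isClearing_self (fun i j => by unfold pathLiab; split <;> norm_num) fun i => ?_
  rw [assets_pathLiab hn]
  simp only [pathLiab]
  by_cases h : (i : ℕ) + 1 < n
  · rw [Fintype.sum_eq_single ⟨i + 1, h⟩ fun j hj => if_neg (by simpa [Fin.ext_iff] using hj),
      if_pos rfl]
  · rw [sum_eq_zero fun j _ => if_neg (by lia)]
    exact zero_le_one

variable {ε : ℝ} {Pay : (Fin n → Finset (Fin n)) → Fin n → Fin n → ℝ}

theorem pay_stableProfile (hn : 3 ≤ n)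
    (hPay : ∀ s, IsMaxClearing ε ε (extAssets n) (removeEdges (liab n) s) (Pay s)) :
    Pay (stableProfile n (by lia)) = pathLiab n := by
  have h := hPay (stableProfile n (by lia))
  rw [removeEdges_stableProfile hn] at h
  exact h.eq_of_isClearing_self (isClearing_pathLiab hn ε)

theorem nashEq_stableProfile (hn : 3 ≤ n) (hε₀ : 0 < ε) (hε₁ : ε < 1)
    (hPay : ∀ s, IsMaxClearing ε ε (extAssets n) (removeEdges (liab n) s) (Pay s)) :
    NashEq (extAssets n) Pay (stableProfile n (by lia)) := by
  intro j R
  rw [pay_stableProfile hn hPay, assets_pathLiab hn]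
  have hq := (hPay (Function.update (stableProfile n (by lia)) j R)).1
  by_cases hj : (j : ℕ) = n - 1
  · obtain rfl : j = ⟨n - 1, Nat.sub_one_lt (Nat.ne_zero_of_lt hn)⟩ := Fin.ext hj
    refine assets_last_le_one hn hε₀ hε₁ hq ?_
    rw [Function.update_of_ne (by simp [Fin.ext_iff]; lia), stableProfile,
      if_neg (by simp only; lia)]
    exact notMem_empty _
  · exact assets_le_one_of_ne_last (by lia) hq hj

/-- A bank on the path that removes its incoming edge has no assets, whereas keeping it would
bring it a positive payment. -/
theorem eq_empty_of_nashEq (hn : 3 ≤ n) (hε₀ : 0 < ε)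
    (hPay : ∀ s, IsMaxClearing ε ε (extAssets n) (removeEdges (liab n) s) (Pay s))
    {s : Fin n → Finset (Fin n)} (hs : ∀ j, ∀ i ∈ s j, 0 < liab n i j)
    (hN : NashEq (extAssets n) Pay s) {j : Fin n} (hj : (j : ℕ) ≠ n - 1) : s j = ∅ := by
  suffices h : ∀ a, a + 1 < n → ∀ j : Fin n, (j : ℕ) ≤ a → s j = ∅ from
    h (n - 2) (by lia) j (by lia)
  intro a
  induction a with
  | zero =>
    intro _ j hj
    refine eq_empty_iff_forall_notMem.mpr fun i hi => ?_
    have := isEdge_of_liab_pos (hs j i hi)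
    lia
  | succ a ih =>
    intro ha j hj
    rcases Nat.lt_or_eq_of_le hj with hj | hj
    · exact ih (by lia) j (by lia)
    by_contra hne
    obtain ⟨i, hi⟩ := nonempty_iff_ne_empty.mpr hne
    have hij : (j : ℕ) = i + 1 := by
      have := isEdge_of_liab_pos (hs j i hi)
      lia
    have hzero : assets (extAssets n) (Pay s) j = 0 := by
      rw [(supported_of_isClearing (hPay s).1).assets_of_pred hij (by lia),
        payment_eq_zero_of_mem (hPay s).1 hi]
    have hkeep : ∀ k : Fin n, (k : ℕ) ≤ a + 1 → Function.update s j ∅ k = ∅ := by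
      intro k hk
      by_cases hkj : k = j
      · rw [hkj, Function.update_self]
      · rw [Function.update_of_ne hkj]
        exact ih (by lia) k (by have := Fin.val_ne_of_ne hkj; lia)
    have hdev := assets_pos_of_keeps hε₀ (hPay _).1 hkeep hj.le
    linarith [hN j ∅]

theorem assets_last_lt_one_of_ne (hn : 3 ≤ n) (hε₀ : 0 < ε) (hε₁ : ε < 1)
    {s : Fin n → Finset (Fin n)} {q : Fin n → Fin n → ℝ}
    (hq : IsClearing ε ε (extAssets n) (removeEdges (liab n) s) q)
    (h1 : ⟨0, by lia⟩ ∉ s ⟨1, by lia⟩)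
    (hs : ∀ i ∈ s ⟨n - 1, by lia⟩, 0 < liab n i ⟨n - 1, by lia⟩)
    (hne : s ⟨n - 1, by lia⟩ ≠ {⟨0, by lia⟩}) :
    assets (extAssets n) q ⟨n - 1, by lia⟩ < 1 := by
  by_cases hc : (⟨0, by lia⟩ : Fin n) ∈ s ⟨n - 1, by lia⟩
  · obtain ⟨i, hi, hi0⟩ : ∃ i ∈ s ⟨n - 1, by lia⟩, i ≠ ⟨0, by lia⟩ := by
      by_contra! h
      exact hne (eq_singleton_iff_unique_mem.mpr ⟨hc, h⟩)
    obtain rfl : i = ⟨n - 2, by lia⟩ := by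
      have := isEdge_of_liab_pos (hs i hi)
      simp only [ne_eq, Fin.ext_iff] at hi0 this ⊢
      lia
    rw [(supported_of_isClearing hq).assets_last hn, payment_eq_zero_of_mem hq hc,
      payment_eq_zero_of_mem hq hi]
    norm_num
  · exact assets_last_lt_one hn hε₀ hε₁ hq h1 hc

theorem eq_stableProfile_of_nashEq (hn : 3 ≤ n) (hε₀ : 0 < ε) (hε₁ : ε < 1)
    (hPay : ∀ s, IsMaxClearing ε ε (extAssets n) (removeEdges (liab n) s) (Pay s))
    {s : Fin n → Finset (Fin n)} (hs : ∀ j, ∀ i ∈ s j, 0 < liab n i j)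
    (hN : NashEq (extAssets n) Pay s) : s = stableProfile n (by lia) := by
  have hkeep : ∀ j : Fin n, (j : ℕ) ≠ n - 1 → s j = ∅ := fun j hj =>
    eq_empty_of_nashEq hn hε₀ hPay hs hN hj
  have hupdate :
      Function.update s ⟨n - 1, by lia⟩ {⟨0, by lia⟩} = stableProfile n (by lia) := by
    funext j
    by_cases hj : j = ⟨n - 1, by lia⟩
    · rw [hj, Function.update_self, stableProfile, if_pos rfl]
    · have hj' : (j : ℕ) ≠ n - 1 := fun h => hj (Fin.ext h)
      rw [Function.update_of_ne hj, stableProfile, if_neg hj', hkeep j hj']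
  have hdev := hN ⟨n - 1, by lia⟩ {⟨0, by lia⟩}
  rw [hupdate, pay_stableProfile hn hPay, assets_pathLiab hn] at hdev
  have hlast : s ⟨n - 1, by lia⟩ = {⟨0, by lia⟩} := by
    by_contra hne
    refine (assets_last_lt_one_of_ne hn hε₀ hε₁ (hPay s).1 ?_ (hs _) hne).not_ge hdev
    rw [hkeep _ (by simp only; lia)]
    exact notMem_empty _
  rw [← hupdate, ← hlast, Function.update_eq_self]

end Equilibrium

section FullNetwork

variable {ε : ℝ}

theorem fullPayments_eq (i j : Fin n) :
    fullPayments n ε i j = (if (i : ℕ) = 0 then ε / 2 else ε ^ ((i : ℕ) + 1) / 2) * liab n i j := by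
  simp only [fullPayments, liab]
  split_ifs <;> lia

theorem fullPayments_of_succ {i j : Fin n} (hij : (j : ℕ) = i + 1) :
    fullPayments n ε i j = ε ^ (j : ℕ) / 2 := by
  rw [fullPayments_eq, liab_eq_one (Or.inl hij), mul_one, hij]
  split_ifs with h
  · rw [h, zero_add, pow_one]
  · rfl

theorem fullPayments_zero_last (hn : 3 ≤ n) :
    fullPayments n ε ⟨0, by lia⟩ ⟨n - 1, by lia⟩ = ε / 2 := by
  rw [fullPayments_eq, liab_eq_one (Or.inr ⟨rfl, rfl⟩), mul_one, if_pos rfl]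

theorem fullPayments_nonneg (hε₀ : 0 < ε) (i j : Fin n) : 0 ≤ fullPayments n ε i j := by
  rw [fullPayments_eq]
  exact mul_nonneg (by split <;> positivity) (liab_nonneg i j)

theorem supported_fullPayments : Supported (fullPayments n ε) := fun i j h => by
  rw [fullPayments_eq, h, mul_zero]

theorem fullPayments_default_of_ne_last (hn : 3 ≤ n) (hε₀ : 0 < ε) (hε₁ : ε < 1) {i : Fin n}
    (hi : (i : ℕ) ≠ n - 1) :
    assets (extAssets n) (fullPayments n ε) i < ∑ j, liab n i j ∧
      ∀ j, fullPayments n ε i j =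
        ε * assets (extAssets n) (fullPayments n ε) i * liab n i j / ∑ k, liab n i k := by
  have hm : Supported (fullPayments n ε) := supported_fullPayments
  by_cases h0 : (i : ℕ) = 0
  · obtain rfl : i = ⟨0, Nat.zero_lt_of_lt hn⟩ := Fin.ext h0
    have hL : ∑ j, liab n ⟨0, Nat.zero_lt_of_lt hn⟩ j = 2 := by
      rw [supported_liab.sum_row_zero hn, liab_eq_one (by simp), liab_eq_one (by simp)]
      norm_num
    refine ⟨by rw [hm.assets_zero (by lia), hL]; norm_num, fun j => ?_⟩
    rw [fullPayments_eq, hm.assets_zero (by lia), hL, if_pos rfl]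
    ring
  · have hpred : (i : ℕ) = (i - 1 : ℕ) + 1 := by lia
    have hA : assets (extAssets n) (fullPayments n ε) i = ε ^ (i : ℕ) / 2 := by
      rw [hm.assets_of_pred (i := ⟨i - 1, by lia⟩) hpred hi, fullPayments_of_succ hpred]
    have hL : ∑ j, liab n i j = 1 := by
      rw [supported_liab.sum_row_of_succ (j := ⟨i + 1, by lia⟩) rfl h0, liab_eq_one (by simp)]
    have hpow : ε ^ (i : ℕ) < 1 := pow_lt_one₀ hε₀.le hε₁ h0
    refine ⟨by rw [hA, hL]; linarith, fun j => ?_⟩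
    rw [fullPayments_eq, hA, hL, if_neg h0, pow_succ]
    ring

theorem isClearing_fullPayments (hn : 3 ≤ n) (hε₀ : 0 < ε) (hε₁ : ε < 1) :
    IsClearing ε ε (extAssets n) (liab n) (fullPayments n ε) := by
  have hlast : ∀ j, liab n ⟨n - 1, by lia⟩ j = 0 := fun j => liab_eq_zero (by simp only; lia)
  refine ⟨fullPayments_nonneg hε₀, fun i j => ?_, fun i hsolv j => ?_, fun i hdef j => ?_⟩
  · rw [fullPayments_eq]
    refine mul_le_of_le_one_left (liab_nonneg i j) ?_
    have : ε ^ ((i : ℕ) + 1) ≤ 1 := pow_le_one₀ hε₀.le hε₁.le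
    split <;> linarith
  · by_cases hi : (i : ℕ) = n - 1
    · obtain rfl : i = ⟨n - 1, Nat.sub_one_lt (Nat.ne_zero_of_lt hn)⟩ := Fin.ext hi
      rw [fullPayments_eq, hlast, mul_zero]
    · exact absurd hsolv (not_le.mpr (fullPayments_default_of_ne_last hn hε₀ hε₁ hi).1)
  · by_cases hi : (i : ℕ) = n - 1
    · obtain rfl : i = ⟨n - 1, Nat.sub_one_lt (Nat.ne_zero_of_lt hn)⟩ := Fin.ext hi
      have hA : 0 ≤ assets (extAssets n) (fullPayments n ε) ⟨n - 1, by lia⟩ :=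
        add_nonneg (extAssets_nonneg _) (sum_nonneg fun k _ => fullPayments_nonneg hε₀ k _)
      simp only [hlast, sum_const_zero] at hdef
      exact absurd hA (not_le.mpr hdef)
    · rw [(fullPayments_default_of_ne_last hn hε₀ hε₁ hi).2 j, assets, mul_add]

theorem isMaxClearing_fullPayments (hn : 3 ≤ n) (hε₀ : 0 < ε) (hε₁ : ε < 1) :
    IsMaxClearing ε ε (extAssets n) (liab n) (fullPayments n ε) := by
  refine ⟨isClearing_fullPayments hn hε₀ hε₁, fun q hq i j => ?_⟩
  rw [← removeEdges_empty (liab n)] at hq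
  by_cases hedge : (j : ℕ) = i + 1 ∨ ((i : ℕ) = 0 ∧ (j : ℕ) = n - 1)
  · rcases hedge with hij | ⟨hi, hj⟩
    · rw [fullPayments_of_succ hij]
      exact payment_le_of_succ hn hε₀ hε₁ hq (notMem_empty _) hij
    · obtain rfl : i = ⟨0, Nat.zero_lt_of_lt hn⟩ := Fin.ext hi
      obtain rfl : j = ⟨n - 1, Nat.sub_one_lt (Nat.ne_zero_of_lt hn)⟩ := Fin.ext hj
      rw [fullPayments_zero_last hn, (payments_from_zero_eq hn hq (notMem_empty _) (notMem_empty _)).2]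
  · rw [(supported_of_isClearing hq) i j (liab_eq_zero hedge)]
    exact fullPayments_nonneg hε₀ i j

theorem sum_col_fullPayments (hn : 3 ≤ n) (j : Fin n) :
    ∑ i, fullPayments n ε i j =
      (if 1 ≤ (j : ℕ) then ε ^ (j : ℕ) / 2 else 0) + (if (j : ℕ) = n - 1 then ε / 2 else 0) := by
  have hm : Supported (fullPayments n ε) := supported_fullPayments
  rcases (by lia : (j : ℕ) = 0 ∨ (j : ℕ) = n - 1 ∨ ((j : ℕ) ≠ 0 ∧ (j : ℕ) ≠ n - 1))
    with h0 | hlast | ⟨h0, hlast⟩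
  · obtain rfl : j = ⟨0, Nat.zero_lt_of_lt hn⟩ := Fin.ext h0
    rw [hm.sum_col_zero (by lia), if_neg (by simp), if_neg (by simp only; lia), add_zero]
  · obtain rfl : j = ⟨n - 1, Nat.sub_one_lt (Nat.ne_zero_of_lt hn)⟩ := Fin.ext hlast
    rw [hm.sum_col_last hn, fullPayments_zero_last hn,
      fullPayments_of_succ (i := ⟨n - 2, by lia⟩) (by simp only; lia),
      if_pos (by simp only; lia), if_pos rfl, add_comm]
  · rw [hm.sum_col_of_pred (i := ⟨j - 1, by lia⟩) (by simp only; lia) hlast,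
      fullPayments_of_succ (by simp only; lia), if_pos (by lia), if_neg hlast, add_zero]

theorem liquidity_fullPayments (hn : 3 ≤ n) :
    liquidity (fullPayments n ε) = ε / 2 + ∑ i ∈ Icc 1 (n - 1), ε ^ i / 2 := by
  rw [liquidity, sum_comm]
  simp only [sum_col_fullPayments hn]
  rw [Fin.sum_univ_eq_sum_range
      (fun j => (if 1 ≤ j then ε ^ j / 2 else 0) + (if j = n - 1 then ε / 2 else 0)) n,
    sum_add_distrib, sum_range_ite_one_le, sum_ite_eq', if_pos (mem_range.mpr (by lia)),
    add_comm]

theorem liquidity_pathLiab (hn : 3 ≤ n) : liquidity (pathLiab n) = (n : ℝ) - 1 := by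
  rw [liquidity_eq_sum_assets_sub_sum (extAssets n), sum_extAssets (by lia)]
  simp [assets_pathLiab hn]

end FullNetwork

end PathChord

theorem half_add_sum_geom_lt {ε : ℝ} (hε₀ : 0 < ε) (hε₁ : ε < 1) (m : ℕ) :
    ε / 2 + ∑ i ∈ Icc 1 m, ε ^ i / 2 < ε / (1 - ε) := by
  have h1ε : 0 < 1 - ε := by linarith
  have hgeom : ∑ i ∈ Icc 1 m, ε ^ i ≤ ε / (1 - ε) := by
    rw [← Finset.Ico_add_one_right_eq_Icc]
    simpa using geom_sum_Ico_le_of_lt_one (m := 1) (n := m + 1) hε₀.le hε₁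
  have hε : ε < ε / (1 - ε) := by
    rw [lt_div_iff₀ h1ε]
    nlinarith
  rw [← sum_div]
  linarith

/-- The network on banks v₁,…,vₙ ↦ 0,…,n-1 with `e_{v1} = 1`, liabilities
`l_{vᵢ,vᵢ₊₁} = 1` (1 ≤ i ≤ n-1) and `l_{v1,vₙ} = 1`, default costs `α = β = ε`, no cash
injections: (i) the full network has the stated maximal clearing payments and liquidity
`ε/2 + ∑_{i=1}^{n-1} εⁱ/2 < ε/(1-ε)`; (ii) the profile in which vₙ removes the edge
(v₁,vₙ) and all other edges are kept is the unique pure Nash equilibrium (among profiles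
removing only existing edges) and has liquidity `n-1`.  Hence the Effect of Stability is
less than `ε/((1-ε)(n-1))`, i.e. arbitrarily close to 0. -/
theorem default_costs_effect_of_stability
    (n : ℕ) (hn : 3 ≤ n) (ε : ℝ) (hε₀ : 0 < ε) (hε₁ : ε < 1)
    (e : Fin n → ℝ) (he : e = fun (i : Fin n) => if (i : ℕ) = 0 then 1 else 0)
    (l : Fin n → Fin n → ℝ)
    (hl : l = fun (a b : Fin n) =>
      if ((b : ℕ) = (a : ℕ) + 1) ∨ ((a : ℕ) = 0 ∧ (b : ℕ) = n - 1) then 1 else 0)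
    (p₁ : Fin n → Fin n → ℝ)
    (hp₁ : p₁ = fun (a b : Fin n) =>
      if (a : ℕ) = 0 ∧ ((b : ℕ) = 1 ∨ (b : ℕ) = n - 1) then ε / 2
      else if (b : ℕ) = (a : ℕ) + 1 ∧ 1 ≤ (a : ℕ) then ε ^ ((a : ℕ) + 1) / 2 else 0)
    (sstar : Fin n → Finset (Fin n))
    (hsstar : sstar = fun (j : Fin n) => if (j : ℕ) = n - 1 then {(⟨0, by omega⟩ : Fin n)} else ∅)
    (Pay : (Fin n → Finset (Fin n)) → Fin n → Fin n → ℝ)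
    (hPay : ∀ s, IsMaxClearing ε ε e (removeEdges l s) (Pay s)) :
    -- (i) maximal clearing payments and liquidity of the full network
    (IsMaxClearing ε ε e l p₁ ∧
      liquidity p₁ = ε / 2 + ∑ i ∈ Finset.Icc 1 (n - 1), ε ^ i / 2 ∧
      liquidity p₁ < ε / (1 - ε))
    -- (ii) sstar is the unique pure Nash equilibrium, with liquidity n-1
    ∧ NashEq e Pay sstar
    ∧ (∀ s : Fin n → Finset (Fin n), (∀ j, ∀ i ∈ s j, 0 < l i j) →
        NashEq e Pay s → s = sstar)
    ∧ liquidity (Pay sstar) = (n : ℝ) - 1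
    -- consequently, the Effect of Stability on this instance is below ε/((1-ε)(n-1))
    ∧ liquidity p₁ / liquidity (Pay sstar) < ε / ((1 - ε) * ((n : ℝ) - 1)) := by
  obtain rfl : e = PathChord.extAssets n := he
  obtain rfl : l = PathChord.liab n := hl
  obtain rfl : p₁ = PathChord.fullPayments n ε := hp₁
  obtain rfl : sstar = PathChord.stableProfile n (by lia) := hsstar
  have hliq₁ := PathChord.liquidity_fullPayments (ε := ε) hn
  have hliq : liquidity (Pay (PathChord.stableProfile n (by lia))) = (n : ℝ) - 1 := by
    rw [PathChord.pay_stableProfile hn hPay, PathChord.liquidity_pathLiab hn]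
  have hlt := half_add_sum_geom_lt hε₀ hε₁ (n - 1)
  refine ⟨⟨PathChord.isMaxClearing_fullPayments hn hε₀ hε₁, hliq₁, hliq₁ ▸ hlt⟩,
    PathChord.nashEq_stableProfile hn hε₀ hε₁ hPay,
    fun s hs hN => PathChord.eq_stableProfile_of_nashEq hn hε₀ hε₁ hPay hs hN, hliq, ?_⟩
  have hn' : (0 : ℝ) < n - 1 := by
    have : (3 : ℝ) ≤ n := by exact_mod_cast hn
    linarith
  rw [hliq₁, hliq, ← div_div]
  exact div_lt_div_of_pos_right hlt hn'
end
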